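/- The convolution algebra R* = (R_{mn}(q))* is generated as a k-algebra by the two elements α = Σ_{i=0}^{mn-1} ξ^i overline{g^i} and β = Σ_{i=0}^{mn-1} overline{g^i x}. -/

import Mathlib

open scoped TensorProduct

noncomputable def qcc {K : Type*} [CommRing K] (q : K) : ℕ → ℕ → K
  | _, 0 => 1
  | 0, _+1 => 0
  | b+1, t+1 => q ^ (b - t) * qcc q b t + qcc q b (t+1)

noncomputable def qdd {K : Type*} [CommRing K] (q : K) : ℕ → K
  | 0 => 1
  | j+1 => qcc q (j+1) 1 * qdd q j

lemma qcc_zero_right {K : Type*} [CommRing K] (q : K) (b : ℕ) : qcc q b 0 = 1 := by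
  cases b <;> rfl

lemma qcc_eq_zero {K : Type*} [CommRing K] (q : K) : ∀ b t, b < t → qcc q b t = 0 := by
  intro b
  induction b with
  | zero => intro t ht; cases t with
    | zero => omega
    | succ t => rfl
  | succ b ih =>
    intro t ht
    cases t with
    | zero => omega
    | succ t =>
      show q ^ (b - t) * qcc q b t + qcc q b (t+1) = 0
      rw [ih t (by omega), ih (t+1) (by omega)]
      ring

lemma qcc_one {K : Type*} [CommRing K] (q : K) :
    ∀ b, qcc q b 1 = ∑ s ∈ Finset.range b, q ^ s := by
  intro b
  induction b with
  | zero => simp [qcc]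
  | succ b ih =>
    show q ^ (b - 0) * qcc q b 0 + qcc q b 1 = _
    rw [Finset.sum_range_succ, ih, qcc_zero_right, Nat.sub_zero]
    ring

/-- The convolution product on the dual `R* = Hom_K(R, K)` of a coalgebra:
`(f * h)(a) = Σ f(a₍₁₎) h(a₍₂₎)`. -/
noncomputable def conv (K : Type*) {R : Type*} [CommRing K] [AddCommMonoid R]
    [Module K R] [Coalgebra K R] (f h : R →ₗ[K] K) : R →ₗ[K] K :=
  LinearMap.mul' K K ∘ₗ TensorProduct.map f h ∘ₗ Coalgebra.comul

/-- the convolution algebra `R* = (R_{mn}(q))*` is generated as a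
`K`-algebra by `α = Σ_{i} ξ^i overline{g^i}` and `β = Σ_{i} overline{g^i x}`:
every element of `R*` is a `K`-linear combination of convolution words in `α`
and `β` (the empty word being the unit `ε` of `R*`). -/
theorem radford_dual_generated (K : Type*) [Field K] [IsAlgClosed K]
    (m n : ℕ) (hm : 2 ≤ m) (hn : 1 ≤ n) (hchar : ¬ (ringChar K ∣ m * n))
    (q : K) (hq : IsPrimitiveRoot q n)
    (ξ : K) (hξ : IsPrimitiveRoot ξ (m * n)) (hξm : ξ ^ m = q)
    (R : Type*) [Ring R] [HopfAlgebra K R] (g x : R)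
    (hgo : g ^ (m * n) = 1) (hxn : x ^ n = g ^ n - 1) (hxg : x * g = q • (g * x))
    (B : Module.Basis (Fin (m * n) × Fin n) K R)
    (hB : ∀ p : Fin (m * n) × Fin n, B p = g ^ (p.1 : ℕ) * x ^ (p.2 : ℕ))
    (hcg : Coalgebra.comul (R := K) g = g ⊗ₜ[K] g)
    (hcx : Coalgebra.comul (R := K) x = x ⊗ₜ[K] g + 1 ⊗ₜ[K] x)
    (heg : Coalgebra.counit (R := K) g = (1 : K))
    (hex : Coalgebra.counit (R := K) x = (0 : K))
    (α β : R →ₗ[K] K)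
    (hα : ∀ (i : Fin (m * n)) (j : Fin n),
      α (g ^ (i : ℕ) * x ^ (j : ℕ)) = if (j : ℕ) = 0 then ξ ^ (i : ℕ) else 0)
    (hβ : ∀ (i : Fin (m * n)) (j : Fin n),
      β (g ^ (i : ℕ) * x ^ (j : ℕ)) = if (j : ℕ) = 1 then 1 else 0) :
    Submodule.span K {f : R →ₗ[K] K |
      ∃ w : List (R →ₗ[K] K), (∀ u ∈ w, u = α ∨ u = β) ∧
        f = w.foldr (conv K) Coalgebra.counit} = ⊤ := by
  have hN : 0 < m * n := by positivity
  have hn0 : 0 < n := hn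
  -- commutation of powers of x with g
  have hxgp : ∀ e : ℕ, x ^ e * g = (q ^ e) • (g * x ^ e) := by
    intro e
    induction e with
    | zero => simp
    | succ e ih =>
      rw [pow_succ, mul_assoc, hxg, mul_smul_comm, ← mul_assoc, ih, smul_mul_assoc,
        smul_smul, mul_assoc, ← pow_succ, ← pow_succ']
  -- comultiplication of powers of x
  have hcomulx : ∀ b : ℕ, Coalgebra.comul (R := K) (x ^ b) =
      ∑ t ∈ Finset.range (b+1), qcc q b t • ((x ^ t) ⊗ₜ[K] (g ^ t * x ^ (b - t))) := by
    intro b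
    induction b with
    | zero =>
      simp [Algebra.TensorProduct.one_def, qcc]
    | succ b ih =>
      rw [pow_succ, Bialgebra.comul_mul, ih, hcx, Finset.sum_mul]
      have LHSeq : ∀ t ∈ Finset.range (b+1),
          (qcc q b t • ((x ^ t) ⊗ₜ[K] (g ^ t * x ^ (b - t)))) * (x ⊗ₜ[K] g + 1 ⊗ₜ[K] x)
            = (q ^ (b - t) * qcc q b t) • ((x ^ (t+1)) ⊗ₜ[K] (g ^ (t+1) * x ^ (b - t)))
              + qcc q b t • ((x ^ t) ⊗ₜ[K] (g ^ t * x ^ (b - t + 1))) := by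
        intro t ht
        have e1 : g ^ t * x ^ (b - t) * g = (q ^ (b - t)) • (g ^ (t+1) * x ^ (b - t)) := by
          rw [mul_assoc, hxgp, mul_smul_comm, ← mul_assoc, ← pow_succ]
        have e2 : g ^ t * x ^ (b - t) * x = g ^ t * x ^ (b - t + 1) := by
          rw [mul_assoc, ← pow_succ]
        rw [mul_add, smul_mul_assoc, smul_mul_assoc, Algebra.TensorProduct.tmul_mul_tmul,
          Algebra.TensorProduct.tmul_mul_tmul, mul_one, ← pow_succ, e1, e2,
          TensorProduct.tmul_smul, smul_smul, mul_comm (qcc q b t)]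
      rw [Finset.sum_congr rfl LHSeq, Finset.sum_add_distrib]
      conv_rhs => rw [Finset.sum_range_succ']
      have RHSeq : ∀ t ∈ Finset.range (b+1),
          qcc q (b+1) (t+1) • ((x ^ (t+1)) ⊗ₜ[K] (g ^ (t+1) * x ^ (b + 1 - (t+1))))
            = (q ^ (b - t) * qcc q b t) • ((x ^ (t+1)) ⊗ₜ[K] (g ^ (t+1) * x ^ (b - t)))
              + qcc q b (t+1) • ((x ^ (t+1)) ⊗ₜ[K] (g ^ (t+1) * x ^ (b - t))) := by
        intro t ht
        have h1 : b + 1 - (t + 1) = b - t := by omega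
        rw [h1, ← add_smul]
        rfl
      rw [Finset.sum_congr rfl RHSeq, Finset.sum_add_distrib]
      rw [add_assoc]
      congr 1
      -- remaining: second sums match
      rw [Finset.sum_range_succ (fun t => qcc q b (t+1) • ((x ^ (t+1)) ⊗ₜ[K] (g ^ (t+1) * x ^ (b - t))))]
      rw [qcc_eq_zero q b (b+1) (by omega), zero_smul, add_zero]
      conv_lhs => rw [Finset.sum_range_succ']
      have LHSeq2 : ∀ t ∈ Finset.range b,
          qcc q b (t+1) • ((x ^ (t+1)) ⊗ₜ[K] (g ^ (t+1) * x ^ (b - (t+1) + 1)))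
            = qcc q b (t+1) • ((x ^ (t+1)) ⊗ₜ[K] (g ^ (t+1) * x ^ (b - t))) := by
        intro t ht
        have ht' := Finset.mem_range.mp ht
        have h1 : b - (t+1) + 1 = b - t := by omega
        rw [h1]
      rw [Finset.sum_congr rfl LHSeq2]
      congr 1
      simp [qcc_zero_right]
  -- comultiplication of basis elements
  have hcg' : ∀ a : ℕ, Coalgebra.comul (R := K) (g ^ a) = (g ^ a) ⊗ₜ[K] (g ^ a) := by
    intro a
    induction a with
    | zero => simp [Algebra.TensorProduct.one_def]
    | succ a ih =>
      rw [pow_succ, Bialgebra.comul_mul, ih, hcg, Algebra.TensorProduct.tmul_mul_tmul,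
        ← pow_succ]
  have hcomul : ∀ a b : ℕ, Coalgebra.comul (R := K) (g ^ a * x ^ b) =
      ∑ t ∈ Finset.range (b+1),
        qcc q b t • ((g ^ a * x ^ t) ⊗ₜ[K] (g ^ (a+t) * x ^ (b - t))) := by
    intro a b
    rw [Bialgebra.comul_mul, hcomulx, hcg', Finset.mul_sum]
    refine Finset.sum_congr rfl fun t ht => ?_
    rw [mul_smul_comm, Algebra.TensorProduct.tmul_mul_tmul, ← mul_assoc, ← pow_add]
  -- evaluation of a convolution on basis elements
  have hconv : ∀ f h : R →ₗ[K] K, ∀ a b : ℕ, conv K f h (g ^ a * x ^ b) =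
      ∑ t ∈ Finset.range (b+1),
        qcc q b t * (f (g ^ a * x ^ t) * h (g ^ (a+t) * x ^ (b - t))) := by
    intro f h a b
    simp only [conv, LinearMap.comp_apply, hcomul a b, map_sum, map_smul,
      TensorProduct.map_tmul, LinearMap.mul'_apply, smul_eq_mul]
  -- reduction of powers of g
  have hgmod : ∀ a : ℕ, g ^ a = g ^ (a % (m*n)) := by
    intro a
    conv_lhs => rw [← Nat.div_add_mod a (m*n)]
    rw [pow_add, pow_mul, hgo, one_pow, one_mul]
  have hξmod : ∀ a : ℕ, ξ ^ a = ξ ^ (a % (m*n)) := by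
    intro a
    conv_lhs => rw [← Nat.div_add_mod a (m*n)]
    rw [pow_add, pow_mul, hξ.pow_eq_one, one_pow, one_mul]
  -- evaluation of α, β, ε on all monomials
  have αv : ∀ a b : ℕ, b < n → α (g ^ a * x ^ b) = if b = 0 then ξ ^ a else 0 := by
    intro a b hb
    have h1 : g ^ a * x ^ b
        = g ^ (((⟨a % (m*n), Nat.mod_lt a hN⟩ : Fin (m*n)) : ℕ))
          * x ^ (((⟨b, hb⟩ : Fin n) : ℕ)) := by
      rw [hgmod a]
    rw [h1, hα]
    simp only []
    rw [← hξmod]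
  have βv : ∀ a b : ℕ, b < n → β (g ^ a * x ^ b) = if b = 1 then 1 else 0 := by
    intro a b hb
    have h1 : g ^ a * x ^ b
        = g ^ (((⟨a % (m*n), Nat.mod_lt a hN⟩ : Fin (m*n)) : ℕ))
          * x ^ (((⟨b, hb⟩ : Fin n) : ℕ)) := by
      rw [hgmod a]
    rw [h1, hβ]
  have ceg : ∀ e : ℕ, Coalgebra.counit (R := K) (g ^ e) = 1 := by
    intro e
    induction e with
    | zero => simp
    | succ e ih => rw [pow_succ, Bialgebra.counit_mul, ih, heg, mul_one]
  have εv : ∀ a b : ℕ, Coalgebra.counit (R := K) (g ^ a * x ^ b)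
      = if b = 0 then 1 else 0 := by
    intro a b
    rw [Bialgebra.counit_mul, ceg]
    cases b with
    | zero => simp
    | succ b => rw [pow_succ, Bialgebra.counit_mul, hex, mul_zero, one_mul]; simp
  -- evaluation of convolution powers of α
  have Gv : ∀ k a b : ℕ, b < n →
      (List.replicate k α).foldr (conv K) Coalgebra.counit (g ^ a * x ^ b)
        = if b = 0 then ξ ^ (a*k) else 0 := by
    intro k
    induction k with
    | zero =>
      intro a b hb
      simpa using εv a b
    | succ k ih =>
      intro a b hb
      rw [List.replicate_succ, List.foldr_cons, hconv]
      rw [Finset.sum_eq_single_of_mem 0 (Finset.mem_range.mpr (by omega))]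
      · rw [qcc_zero_right, one_mul, αv a 0 hn0, Nat.sub_zero, Nat.add_zero,
          ih a b hb, if_pos rfl]
        by_cases hb0 : b = 0
        · rw [if_pos hb0, if_pos hb0, ← pow_add]
          congr 1
          ring
        · rw [if_neg hb0, if_neg hb0, mul_zero]
      · intro t ht htne
        rw [αv a t (by have := Finset.mem_range.mp ht; omega), if_neg htne,
          zero_mul, mul_zero]
  -- evaluation of the words β^{*j} * α^{*k}
  have Hv : ∀ j k a b : ℕ, b < n →
      ((List.replicate j β ++ List.replicate k α).foldr (conv K) Coalgebra.counit)
          (g ^ a * x ^ b)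
        = if b = j then qdd q j * ξ ^ ((a+j)*k) else 0 := by
    intro j
    induction j with
    | zero =>
      intro k a b hb
      rw [List.replicate_zero, List.nil_append, Gv k a b hb]
      simp [qdd]
    | succ j ih =>
      intro k a b hb
      rw [List.replicate_succ, List.cons_append, List.foldr_cons, hconv]
      rcases Nat.eq_zero_or_pos b with rfl | hbpos
      · rw [Finset.sum_range_one, βv a 0 hn0]
        norm_num
      · rw [Finset.sum_eq_single_of_mem 1 (Finset.mem_range.mpr (by omega))]
        · rw [βv a 1 (by omega), if_pos rfl, one_mul, ih k (a+1) (b-1) (by omega)]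
          by_cases hbj : b = j + 1
          · rw [if_pos (by omega), if_pos hbj]
            subst hbj
            show qcc q (j+1) 1 * (qdd q j * ξ ^ ((a + 1 + j) * k))
              = qcc q (j+1) 1 * qdd q j * ξ ^ ((a + (j+1)) * k)
            rw [← mul_assoc]
            have h3 : a + 1 + j = a + (j+1) := by omega
            rw [h3]
          · rw [if_neg (by omega), if_neg hbj, mul_zero]
        · intro t ht htne
          rw [βv a t (by have := Finset.mem_range.mp ht; omega), if_neg htne,
            zero_mul, mul_zero]
  have hqcc1_ne : ∀ b : ℕ, 0 < b → b < n → qcc q b 1 ≠ 0 := by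
    intro b hb0 hbn
    rw [qcc_one]
    have hq1 : q ≠ 1 := by
      intro h
      have := hq.pow_eq_one
      have h2 : n = 1 := by
        by_contra hne
        have := hq.pow_ne_one_of_pos_of_lt hb0.ne' hbn
        rw [h, one_pow] at this
        exact this rfl
      omega
    rw [geom_sum_eq hq1]
    have hqb : q ^ b ≠ 1 := hq.pow_ne_one_of_pos_of_lt hb0.ne' hbn
    exact div_ne_zero (sub_ne_zero_of_ne hqb) (sub_ne_zero_of_ne hq1)
  have hd_ne : ∀ j : ℕ, j < n → qdd q j ≠ 0 := by
    intro j hj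
    induction j with
    | zero => simp [qdd]
    | succ j ih =>
      show qcc q (j+1) 1 * qdd q j ≠ 0
      exact mul_ne_zero (hqcc1_ne (j+1) (Nat.succ_pos j) hj) (ih (by omega))
  set S := Submodule.span K {f : R →ₗ[K] K |
      ∃ w : List (R →ₗ[K] K), (∀ u ∈ w, u = α ∨ u = β) ∧
        f = w.foldr (conv K) Coalgebra.counit} with hS
  have hmem : ∀ j k : ℕ,
      (List.replicate j β ++ List.replicate k α).foldr (conv K) Coalgebra.counit ∈ S := by
    intro j k
    apply Submodule.subset_span
    refine ⟨_, ?_, rfl⟩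
    intro u hu
    rcases List.mem_append.mp hu with h | h
    · exact Or.inr (List.eq_of_mem_replicate h)
    · exact Or.inl (List.eq_of_mem_replicate h)
  have hK0 : ((m*n : ℕ) : K) ≠ 0 := fun h => hchar ((ringChar.spec K (m*n)).mp h)
  have hξ0 : ξ ≠ 0 := hξ.ne_zero (by omega)
  have hcoord : ∀ p : Fin (m * n) × Fin n, B.coord p ∈ S := by
    rintro ⟨i0, j0⟩
    have hd0 : qdd q (j0 : ℕ) ≠ 0 := hd_ne _ j0.isLt
    have key : B.coord (i0, j0) = ∑ k ∈ Finset.range (m*n),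
        ((((m*n : ℕ) : K) * qdd q (j0 : ℕ) * ξ ^ (((i0 : ℕ) + (j0 : ℕ)) * k))⁻¹) •
          ((List.replicate (j0 : ℕ) β ++ List.replicate k α).foldr (conv K)
            Coalgebra.counit) := by
      apply B.ext
      rintro ⟨i, j⟩
      have hBij : B (i, j) = g ^ (i : ℕ) * x ^ (j : ℕ) := hB (i, j)
      rw [hBij, Module.Basis.coord_apply]
      have hrepr : B.repr (g ^ (i : ℕ) * x ^ (j : ℕ)) = Finsupp.single (i,j) 1 := by
        rw [← hBij, Module.Basis.repr_self]
      rw [hrepr, Finsupp.single_apply]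
      simp only [LinearMap.sum_apply, LinearMap.smul_apply, smul_eq_mul]
      rw [Finset.sum_congr rfl (fun k _ => by
        rw [Hv (j0 : ℕ) k (i : ℕ) (j : ℕ) j.isLt])]
      by_cases hjj : (j : ℕ) = (j0 : ℕ)
      · simp only [if_pos hjj]
        set ζ : K := ξ ^ ((i : ℕ) + (j0 : ℕ)) * (ξ ^ ((i0 : ℕ) + (j0 : ℕ)))⁻¹ with hζ
        have hterm : ∀ k : ℕ,
            ((((m*n : ℕ) : K) * qdd q (j0 : ℕ) * ξ ^ (((i0 : ℕ) + (j0 : ℕ)) * k))⁻¹)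
              * (qdd q (j0 : ℕ) * ξ ^ (((i : ℕ) + (j0 : ℕ)) * k))
            = (((m*n : ℕ) : K))⁻¹ * ζ ^ k := by
          intro k
          have hζk : ζ ^ k = ξ ^ (((i : ℕ) + (j0 : ℕ)) * k)
              * (ξ ^ (((i0 : ℕ) + (j0 : ℕ)) * k))⁻¹ := by
            rw [hζ, mul_pow, inv_pow, ← pow_mul, ← pow_mul]
          rw [hζk, mul_inv, mul_inv]
          have h2 : (((m*n : ℕ) : K))⁻¹ * (qdd q (j0:ℕ))⁻¹ * (ξ ^ (((i0:ℕ) + (j0:ℕ)) * k))⁻¹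
              * (qdd q (j0:ℕ) * ξ ^ (((i:ℕ) + (j0:ℕ)) * k))
            = (((m*n : ℕ) : K))⁻¹ * (ξ ^ (((i:ℕ) + (j0:ℕ)) * k)
                * (ξ ^ (((i0:ℕ) + (j0:ℕ)) * k))⁻¹) * ((qdd q (j0:ℕ))⁻¹ * qdd q (j0:ℕ)) := by
            ring
          rw [h2, inv_mul_cancel₀ hd0, mul_one]
        rw [Finset.sum_congr rfl (fun k _ => hterm k), ← Finset.mul_sum]
        by_cases hii : (i : ℕ) = (i0 : ℕ)
        · have hζ1 : ζ = 1 := by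
            rw [hζ, hii, mul_inv_cancel₀ (pow_ne_zero _ hξ0)]
          have hpp : (i, j) = (i0, j0) := by
            ext <;> simp [hii, hjj]
          rw [if_pos hpp, hζ1]
          simp only [one_pow, Finset.sum_const, Finset.card_range, nsmul_eq_mul, mul_one]
          rw [inv_mul_cancel₀ hK0]
        · have hζ1 : ζ ≠ 1 := by
            intro h1
            rw [hζ, mul_inv_eq_one₀ (pow_ne_zero _ hξ0)] at h1
            rw [pow_add, pow_add] at h1
            have h2 := mul_right_cancel₀ (pow_ne_zero _ hξ0) h1
            exact hii (hξ.pow_inj i.isLt i0.isLt h2)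
          have hζmn : ζ ^ (m * n) = 1 := by
            rw [hζ, mul_pow, inv_pow, pow_right_comm, pow_right_comm ξ ((i0:ℕ)+(j0:ℕ)),
              hξ.pow_eq_one, one_pow, one_pow, inv_one, mul_one]
          rw [geom_sum_eq hζ1, hζmn, sub_self, zero_div, mul_zero]
          rw [if_neg (by
            intro h
            rw [Prod.ext_iff] at h
            exact hii (congrArg Fin.val h.1) )]
      · have h0 : ∀ k ∈ Finset.range (m*n),
            ((((m*n : ℕ) : K) * qdd q (j0 : ℕ) * ξ ^ (((i0 : ℕ) + (j0 : ℕ)) * k))⁻¹)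
              * (if (j : ℕ) = (j0 : ℕ) then qdd q (j0:ℕ) * ξ ^ (((i:ℕ) + (j0:ℕ)) * k) else 0)
            = 0 := by
          intro k _
          rw [if_neg hjj, mul_zero]
        rw [Finset.sum_congr rfl h0, Finset.sum_const, smul_zero]
        rw [if_neg (by
          intro h
          rw [Prod.ext_iff] at h
          exact hjj (congrArg Fin.val h.2) )]
    rw [key]
    exact Submodule.sum_mem _ fun k _ => Submodule.smul_mem _ _ (hmem _ k)
  -- conclude
  rw [eq_top_iff]
  rintro f -
  have hf : f = ∑ p : Fin (m * n) × Fin n, f (B p) • B.coord p := by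
    apply B.ext
    intro p'
    simp only [LinearMap.sum_apply, LinearMap.smul_apply, Module.Basis.coord_apply, Module.Basis.repr_self,
      smul_eq_mul]
    rw [Finset.sum_eq_single p']
    · simp
    · intro p _ hp
      simp [Finsupp.single_apply, hp.symm]
    · intro h; exact absurd (Finset.mem_univ p') h
  rw [hf]
  exact Submodule.sum_mem _ fun p _ => Submodule.smul_mem _ _ (hcoord p)
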